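/- Under the Case 2 configuration of the path-in-square setting, if additionally ab, bc, cd, de are edges of G, then none of the vertices v2, b, v5, d belongs to D. -/

import Mathlib

/-- The square of a graph `G`: two distinct vertices are adjacent in `G²` iff
their distance in `G` is 1 or 2. -/
def SimpleGraph.square {V : Type*} (G : SimpleGraph V) : SimpleGraph V where
  Adj u v := u ≠ v ∧ G.edist u v ≤ 2
  symm := ⟨fun u v ⟨h, hd⟩ => ⟨h.symm, by rwa [SimpleGraph.edist_comm]⟩⟩
  loopless := ⟨fun u ⟨h, _⟩ => h rfl⟩

/-- `D` is an efficient dominating set of `G`: `D` is an independent set and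
every vertex outside `D` has exactly one neighbor in `D`. -/
def SimpleGraph.IsEfficientDominatingSet {V : Type*} (G : SimpleGraph V) (D : Set V) : Prop :=
  (∀ u ∈ D, ∀ v ∈ D, ¬ G.Adj u v) ∧ ∀ v ∉ D, ∃! u, u ∈ D ∧ G.Adj v u

/-- The banner: a chordless 4-cycle 0-1-2-3-0 together with the vertex 4
adjacent to exactly one vertex (namely 0) of the cycle. -/
def banner : SimpleGraph (Fin 5) :=
  SimpleGraph.fromEdgeSet {s(0, 1), s(1, 2), s(2, 3), s(3, 0), s(0, 4)}

/-- `G` is `H`-free: no induced subgraph of `G` is isomorphic to `H`. -/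
def IsInducedFree {W V : Type*} (H : SimpleGraph W) (G : SimpleGraph V) : Prop :=
  IsEmpty (H ↪g G)

section Helpers

variable {V : Type*} {G : SimpleGraph V}

private lemma far_not_adj {x y : V} (h : 3 ≤ G.edist x y) : ¬ G.Adj x y := by
  intro ha
  rw [← SimpleGraph.edist_eq_one_iff_adj] at ha
  rw [ha] at h
  norm_num at h

private lemma far_ne {x y : V} (h : 3 ≤ G.edist x y) : x ≠ y := by
  rintro rfl
  rw [SimpleGraph.edist_self] at h
  norm_num at h

private lemma far_no_common {x y z : V} (h : 3 ≤ G.edist x y)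
    (h1 : G.Adj x z) (h2 : G.Adj z y) : False := by
  have t : G.edist x y ≤ G.edist x z + G.edist z y := G.edist_triangle
  rw [SimpleGraph.edist_eq_one_iff_adj.2 h1, SimpleGraph.edist_eq_one_iff_adj.2 h2] at t
  have := h.trans t
  norm_num at this

private lemma two_not_adj {x y : V} (h : G.edist x y = 2) : ¬ G.Adj x y := by
  intro ha
  rw [← SimpleGraph.edist_eq_one_iff_adj] at ha
  rw [ha] at h
  norm_num at h

private lemma two_ne {x y : V} (h : G.edist x y = 2) : x ≠ y := by
  rintro rfl
  rw [SimpleGraph.edist_self] at h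
  norm_num at h

private lemma uniqNbr {D : Set V} (hD : G.IsEfficientDominatingSet D)
    {x z1 z2 : V} (hx : x ∉ D) (h1 : z1 ∈ D) (h2 : z2 ∈ D)
    (a1 : G.Adj x z1) (a2 : G.Adj x z2) : z1 = z2 := by
  obtain ⟨u, -, hu⟩ := hD.2 x hx
  rw [hu z1 ⟨h1, a1⟩, hu z2 ⟨h2, a2⟩]

set_option maxRecDepth 8000 in
private lemma no_p6 (G : SimpleGraph V)
    (hP6 : IsInducedFree (SimpleGraph.pathGraph 6) G)
    (x0 x1 x2 x3 x4 x5 : V)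
    (e01 : G.Adj x0 x1) (e12 : G.Adj x1 x2) (e23 : G.Adj x2 x3)
    (e34 : G.Adj x3 x4) (e45 : G.Adj x4 x5)
    (n02 : ¬ G.Adj x0 x2) (n03 : ¬ G.Adj x0 x3) (n04 : ¬ G.Adj x0 x4)
    (n05 : ¬ G.Adj x0 x5) (n13 : ¬ G.Adj x1 x3) (n14 : ¬ G.Adj x1 x4)
    (n15 : ¬ G.Adj x1 x5) (n24 : ¬ G.Adj x2 x4) (n25 : ¬ G.Adj x2 x5)
    (n35 : ¬ G.Adj x3 x5)
    (d02 : x0 ≠ x2) (d03 : x0 ≠ x3) (d04 : x0 ≠ x4) (d05 : x0 ≠ x5)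
    (d13 : x1 ≠ x3) (d14 : x1 ≠ x4) (d15 : x1 ≠ x5)
    (d24 : x2 ≠ x4) (d25 : x2 ≠ x5) (d35 : x3 ≠ x5) : False := by
  have d01 := e01.ne; have d12 := e12.ne; have d23 := e23.ne
  have d34 := e34.ne; have d45 := e45.ne
  have c5 : (![x0,x1,x2,x3,x4,x5] : Fin 6 → V) 5 = x5 := rfl
  refine hP6.false ⟨⟨![x0,x1,x2,x3,x4,x5], ?_⟩, ?_⟩
  · intro i j h
    fin_cases i <;> fin_cases j <;> simp_all [c5]
  · intro i j
    change G.Adj (![x0,x1,x2,x3,x4,x5] i) (![x0,x1,x2,x3,x4,x5] j) ↔ _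
    simp only [SimpleGraph.pathGraph_adj, Function.Embedding.coeFn_mk]
    fin_cases i <;> fin_cases j <;>
      simp_all [c5, G.adj_comm, SimpleGraph.irrefl]

set_option maxRecDepth 8000 in
private lemma no_banner (G : SimpleGraph V)
    (hB : IsInducedFree banner G)
    (x0 x1 x2 x3 x4 : V)
    (e01 : G.Adj x0 x1) (e12 : G.Adj x1 x2) (e23 : G.Adj x2 x3)
    (e30 : G.Adj x3 x0) (e04 : G.Adj x0 x4)
    (n02 : ¬ G.Adj x0 x2) (n13 : ¬ G.Adj x1 x3) (n14 : ¬ G.Adj x1 x4)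
    (n24 : ¬ G.Adj x2 x4) (n34 : ¬ G.Adj x3 x4)
    (d02 : x0 ≠ x2) (d13 : x1 ≠ x3) (d14 : x1 ≠ x4)
    (d24 : x2 ≠ x4) (d34 : x3 ≠ x4) : False := by
  have d01 := e01.ne; have d12 := e12.ne; have d23 := e23.ne
  have d30 := e30.ne; have d04 := e04.ne; have e03 := e30.symm
  refine hB.false ⟨⟨![x0,x1,x2,x3,x4], ?_⟩, ?_⟩
  · intro i j h
    fin_cases i <;> fin_cases j <;> simp_all
  · intro i j
    change G.Adj (![x0,x1,x2,x3,x4] i) (![x0,x1,x2,x3,x4] j) ↔ _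
    have hiff : ∀ i j : Fin 5, banner.Adj i j ↔
        ((i=0∧j=1)∨(j=0∧i=1)∨(i=1∧j=2)∨(j=1∧i=2)∨(i=2∧j=3)∨(j=2∧i=3)∨
         (i=3∧j=0)∨(j=3∧i=0)∨(i=0∧j=4)∨(j=0∧i=4)) := by
      intro i j
      fin_cases i <;> fin_cases j <;>
        simp [banner, SimpleGraph.fromEdgeSet_adj, Set.mem_insert_iff,
          Set.mem_singleton_iff, Sym2.eq_iff]
    rw [hiff]
    fin_cases i <;> fin_cases j <;> simp_all [G.adj_comm]

private lemma lem_b (G : SimpleGraph V)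
    (hP6 : IsInducedFree (SimpleGraph.pathGraph 6) G)
    (D : Set V) (hD : G.IsEfficientDominatingSet D)
    (v1 v2 v3 v4 a b c : V)
    (h13 : 3 ≤ G.edist v1 v3) (h14 : 3 ≤ G.edist v1 v4) (h24 : 3 ≤ G.edist v2 v4)
    (hav1 : G.Adj a v1) (hbv2 : G.Adj b v2) (hbv3 : G.Adj b v3)
    (hcv3 : G.Adj c v3) (hcv4 : G.Adj c v4) (hab : G.Adj a b) (hbc : G.Adj b c) :
    b ∉ D := by
  intro hbD
  have hind := hD.1
  have nav3 : ¬ G.Adj a v3 := fun h => far_no_common h13 hav1.symm h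
  have nav4 : ¬ G.Adj a v4 := fun h => far_no_common h14 hav1.symm h
  have nbv1 : ¬ G.Adj b v1 := fun h => far_no_common h13 h.symm hbv3
  have nbv4 : ¬ G.Adj b v4 := fun h => far_no_common h24 hbv2.symm h
  have ncv1 : ¬ G.Adj c v1 := fun h => far_no_common h13 h.symm hcv3
  have nv14 : ¬ G.Adj v1 v4 := far_not_adj h14
  have haD : a ∉ D := fun h => hind a h b hbD hab
  have hcD : c ∉ D := fun h => hind b hbD c h hbc
  have hv2D : v2 ∉ D := fun h => hind b hbD v2 h hbv2
  have hv3D : v3 ∉ D := fun h => hind b hbD v3 h hbv3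
  have hv1b : v1 ≠ b := by rintro rfl; exact far_not_adj h13 hbv3
  have hv1D : v1 ∉ D := fun h => hv1b (uniqNbr hD haD h hbD hav1 hab)
  obtain ⟨u, ⟨huD, hv1u⟩, -⟩ := hD.2 v1 hv1D
  have hv4b : v4 ≠ b := by rintro rfl; exact far_not_adj h24 hbv2.symm
  have hv4D : v4 ∉ D := fun h => hv4b (uniqNbr hD hcD h hbD hcv4 hbc.symm)
  obtain ⟨w, ⟨hwD, hv4w⟩, -⟩ := hD.2 v4 hv4D
  have hub : u ≠ b := by rintro rfl; exact nbv1 hv1u.symm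
  have hwb : w ≠ b := by rintro rfl; exact nbv4 hv4w.symm
  have nau : ¬ G.Adj a u := fun h => hub (uniqNbr hD haD huD hbD h hab)
  have ncu : ¬ G.Adj c u := fun h => hub (uniqNbr hD hcD huD hbD h hbc.symm)
  have nuv4 : ¬ G.Adj u v4 := fun h => far_no_common h14 hv1u h
  have nuw : ¬ G.Adj u w := hind u huD w hwD
  have huw : u ≠ w := by rintro rfl; exact far_no_common h14 hv1u hv4w.symm
  have naw : ¬ G.Adj a w := fun h => hwb (uniqNbr hD haD hwD hbD h hab)
  have ncw : ¬ G.Adj c w := fun h => hwb (uniqNbr hD hcD hwD hbD h hbc.symm)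
  have nv1w : ¬ G.Adj v1 w := fun h => far_no_common h14 h hv4w.symm
  have nbw : ¬ G.Adj b w := hind b hbD w hwD
  by_cases hac : G.Adj a c
  · exact no_p6 G hP6 u v1 a c v4 w
      hv1u.symm hav1.symm hac hcv4 hv4w
      (fun h => nau h.symm) (fun h => ncu h.symm) nuv4 nuw
      (fun h => ncv1 h.symm) nv14 nv1w nav4 naw ncw
      (fun h => haD (h ▸ huD)) (fun h => hcD (h ▸ huD))
      (fun h => hv4D (h ▸ huD)) huw
      (by rintro rfl; exact nv14 hcv4) (far_ne h14)
      (fun h => hv1D (h ▸ hwD))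
      (by rintro rfl; exact nv14 hav1.symm)
      (fun h => haD (h ▸ hwD)) (fun h => hcD (h ▸ hwD))
  · exact no_p6 G hP6 w v4 c b a v1
      hv4w.symm hcv4.symm hbc.symm hab.symm hav1
      (fun h => ncw h.symm) (fun h => nbw h.symm) (fun h => naw h.symm)
      (fun h => nv1w h.symm) (fun h => nbv4 h.symm) (fun h => nav4 h.symm)
      (fun h => nv14 h.symm) (fun h => hac h.symm) ncv1 nbv1
      (fun h => hcD (h ▸ hwD)) hwb (fun h => haD (h ▸ hwD))
      (fun h => hv1D (h ▸ hwD)) hv4b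
      (by rintro rfl; exact nv14 hav1.symm) (far_ne h14).symm
      (by rintro rfl; exact nav4 hcv4)
      (by rintro rfl; exact far_not_adj h13 hcv3) hv1b.symm

private lemma lem_v2 (G : SimpleGraph V)
    (hP6 : IsInducedFree (SimpleGraph.pathGraph 6) G)
    (hBanner : IsInducedFree banner G)
    (D : Set V) (hD : G.IsEfficientDominatingSet D)
    (v1 v2 v3 v4 a b c : V)
    (hdist12 : G.edist v1 v2 = 2)
    (h13 : 3 ≤ G.edist v1 v3) (h14 : 3 ≤ G.edist v1 v4) (h24 : 3 ≤ G.edist v2 v4)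
    (hav1 : G.Adj a v1) (hav2 : G.Adj a v2) (hbv2 : G.Adj b v2) (hbv3 : G.Adj b v3)
    (hcv3 : G.Adj c v3) (hcv4 : G.Adj c v4) (hab : G.Adj a b) :
    v2 ∉ D := by
  intro h2D
  have hind := hD.1
  have nv12 : ¬ G.Adj v1 v2 := two_not_adj hdist12
  have d12 : v1 ≠ v2 := two_ne hdist12
  have haD : a ∉ D := fun h => hind a h v2 h2D hav2
  have hbD : b ∉ D := fun h => hind b h v2 h2D hbv2
  have hv1D : v1 ∉ D := fun h => d12 (uniqNbr hD haD h h2D hav1 hav2)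
  obtain ⟨u, ⟨huD, hv1u⟩, -⟩ := hD.2 v1 hv1D
  have huv2 : u ≠ v2 := by rintro rfl; exact nv12 hv1u
  have nau : ¬ G.Adj a u := fun h => huv2 (uniqNbr hD haD huD h2D h hav2)
  have nbu : ¬ G.Adj b u := fun h => huv2 (uniqNbr hD hbD huD h2D h hbv2)
  have nuv3 : ¬ G.Adj u v3 := fun h => far_no_common h13 hv1u h
  have nuv2 : ¬ G.Adj u v2 := hind u huD v2 h2D
  have ncv1 : ¬ G.Adj c v1 := fun h => far_no_common h13 h.symm hcv3
  have nav3 : ¬ G.Adj a v3 := fun h => far_no_common h13 hav1.symm h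
  have nv2c : ¬ G.Adj v2 c := fun h => far_no_common h24 h hcv4
  have dv2c : v2 ≠ c := by rintro rfl; exact far_not_adj h24 hcv4
  have d13' : v1 ≠ v3 := far_ne h13
  have nv13 : ¬ G.Adj v1 v3 := far_not_adj h13
  have d23 : v2 ≠ v3 := by
    rintro rfl
    rw [hdist12] at h13
    norm_num at h13
  by_cases h23 : G.Adj v2 v3
  · by_cases hac : G.Adj a c
    · exact no_banner G hBanner a v2 v3 c v1
        hav2 h23 hcv3.symm hac.symm hav1
        nav3 nv2c (fun h => nv12 h.symm) (fun h => nv13 h.symm) ncv1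
        (by rintro rfl; exact nv13 hav1.symm) dv2c d12.symm d13'.symm
        (by rintro rfl; exact nv13 hcv3)
    · by_cases huc : G.Adj u c
      · exact no_p6 G hP6 v2 a v1 u c v4
          hav2.symm hav1 hv1u huc hcv4
          (fun h => nv12 h.symm) (fun h => nuv2 h.symm) nv2c (far_not_adj h24)
          nau hac (fun h => far_no_common h14 hav1.symm h)
          (fun h => ncv1 h.symm) (far_not_adj h14)
          (fun h => far_no_common h14 hv1u h)
          d12.symm huv2.symm dv2c (far_ne h24)
          (fun h => haD (h ▸ huD))
          (by rintro rfl; exact ncv1 hav1)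
          (by rintro rfl; exact far_not_adj h14 hav1.symm)
          (by rintro rfl; exact nv13 hcv3) (far_ne h14)
          (by rintro rfl; exact far_not_adj h14 hv1u)
      · exact no_p6 G hP6 u v1 a v2 v3 c
          hv1u.symm hav1.symm hav2 h23 hcv3.symm
          (fun h => nau h.symm) nuv2 nuv3 huc
          nv12 nv13 (fun h => ncv1 h.symm) nav3 hac nv2c
          (fun h => haD (h ▸ huD)) huv2
          (by rintro rfl; exact nv13 hv1u)
          (by rintro rfl; exact ncv1 hv1u.symm)
          d12 d13' (by rintro rfl; exact nv13 hcv3)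
          (by rintro rfl; exact nv13 hav1.symm)
          (by rintro rfl; exact ncv1 hav1) dv2c
  · have hv3D : v3 ∉ D := fun h => d23 (uniqNbr hD hbD h h2D hbv3 hbv2).symm
    obtain ⟨w3, ⟨hw3D, hv3w3⟩, -⟩ := hD.2 v3 hv3D
    have hw3v2 : w3 ≠ v2 := by rintro rfl; exact h23 hv3w3.symm
    have naw3 : ¬ G.Adj a w3 := fun h => hw3v2 (uniqNbr hD haD hw3D h2D h hav2)
    have nbw3 : ¬ G.Adj b w3 := fun h => hw3v2 (uniqNbr hD hbD hw3D h2D h hbv2)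
    exact no_p6 G hP6 u v1 a b v3 w3
      hv1u.symm hav1.symm hab hbv3 hv3w3
      (fun h => nau h.symm) (fun h => nbu h.symm) nuv3
      (hind u huD w3 hw3D)
      (fun h => far_no_common h13 h hbv3) nv13
      (fun h => far_no_common h13 h hv3w3.symm)
      nav3 naw3 nbw3
      (fun h => haD (h ▸ huD)) (fun h => hbD (h ▸ huD))
      (by rintro rfl; exact nv13 hv1u)
      (by rintro rfl; exact far_no_common h13 hv1u hv3w3.symm)
      (by rintro rfl; exact nv13 hbv3) d13'
      (fun h => hv1D (h ▸ hw3D))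
      (by rintro rfl; exact nv13 hav1.symm)
      (fun h => haD (h ▸ hw3D)) (fun h => hbD (h ▸ hw3D))

end Helpers

theorem path_case2_v2_b_v5_d_notin_D {V : Type*} [Fintype V] (G : SimpleGraph V)
    (hP6 : IsInducedFree (SimpleGraph.pathGraph 6) G)
    (hBanner : IsInducedFree banner G)
    (D : Set V) (hD : G.IsEfficientDominatingSet D)
    (v1 v2 v3 v4 v5 v6 : V)
    (h12 : G.edist v1 v2 ≤ 2) (h23 : G.edist v2 v3 ≤ 2) (h34 : G.edist v3 v4 ≤ 2)
    (h45 : G.edist v4 v5 ≤ 2) (h56 : G.edist v5 v6 ≤ 2)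
    (h13 : 3 ≤ G.edist v1 v3) (h14 : 3 ≤ G.edist v1 v4) (h15 : 3 ≤ G.edist v1 v5)
    (h16 : 3 ≤ G.edist v1 v6) (h24 : 3 ≤ G.edist v2 v4) (h25 : 3 ≤ G.edist v2 v5)
    (h26 : 3 ≤ G.edist v2 v6) (h35 : 3 ≤ G.edist v3 v5) (h36 : 3 ≤ G.edist v3 v6)
    (h46 : 3 ≤ G.edist v4 v6)
    (hdist12 : G.edist v1 v2 = 2) (hdist56 : G.edist v5 v6 = 2)
    (a e b d c : V)
    (hav1 : G.Adj a v1) (hav2 : G.Adj a v2) (hev5 : G.Adj e v5) (hev6 : G.Adj e v6)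
    (hbv2 : G.Adj b v2) (hbv3 : G.Adj b v3) (hdv4 : G.Adj d v4) (hdv5 : G.Adj d v5)
    (hcv3 : G.Adj c v3) (hcv4 : G.Adj c v4)
    (hab : G.Adj a b) (hbc : G.Adj b c) (hcd : G.Adj c d) (hde : G.Adj d e)
    : v2 ∉ D ∧ b ∉ D ∧ v5 ∉ D ∧ d ∉ D := by
  have h46' : 3 ≤ G.edist v6 v4 := by rw [SimpleGraph.edist_comm]; exact h46
  have h36' : 3 ≤ G.edist v6 v3 := by rw [SimpleGraph.edist_comm]; exact h36
  have h35' : 3 ≤ G.edist v5 v3 := by rw [SimpleGraph.edist_comm]; exact h35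
  have hdist56' : G.edist v6 v5 = 2 := by rw [SimpleGraph.edist_comm]; exact hdist56
  refine ⟨?_, ?_, ?_, ?_⟩
  · exact lem_v2 G hP6 hBanner D hD v1 v2 v3 v4 a b c hdist12 h13 h14 h24
      hav1 hav2 hbv2 hbv3 hcv3 hcv4 hab
  · exact lem_b G hP6 D hD v1 v2 v3 v4 a b c h13 h14 h24
      hav1 hbv2 hbv3 hcv3 hcv4 hab hbc
  · exact lem_v2 G hP6 hBanner D hD v6 v5 v4 v3 e d c hdist56' h46' h36' h35'
      hev6 hev5 hdv5 hdv4 hcv4 hcv3 hde.symm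
  · exact lem_b G hP6 D hD v6 v5 v4 v3 e d c h46' h36' h35'
      hev6 hdv5 hdv4 hcv4 hcv3 hde.symm hcd.symm
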